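/- Let λ, ε > 0, μ = √(λ(λε² + 2)), w₊ = λε² + με + 1 and w₋ = λε² − με + 1. Suppose f, g : ℝ \ {0} → ℝ are Lebesgue integrable, differentiable on (−∞,0) and on (0,∞), and satisfy for all x ∈ ℝ \ {0}: (λε² + 1)·f(x) + ε·f'(x) = g(x) and (λε² + 1)·g(x) − ε·g'(x) = f(x). Then there exist constants c₁, c₂ ∈ ℝ such that f(x) = c₁ e^{μx} for x < 0, f(x) = c₂ e^{−μx} for x > 0, g(x) = c₁ w₊ e^{μx} for x < 0, and g(x) = c₂ w₋ e^{−μx} for x > 0. -/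

import Mathlib

open MeasureTheory Real

/-! With `a = λε² + 1` the system reads `ε f' = g - a f`, `ε g' = a g - f`. For `c = ±μ` and
`w = a - c ε` (so `(c ε)² = a² - 1`), the combination `u = g - w f` solves `u' = c u`, hence is a
multiple of `exp (c x)` on each half-line. On the half-line where `exp (c x)` does not decay,
integrability forces `u = 0`; then `g = w f` there and the first equation becomes `f' = -c f`. -/

theorem exists_eq_mul_exp_of_hasDerivAt {s : Set ℝ} (hs : IsOpen s) (hs' : IsPreconnected s)
    {u : ℝ → ℝ} {c : ℝ} (hu : ∀ x ∈ s, HasDerivAt u (c * u x) x) :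
    ∃ A, ∀ x ∈ s, u x = A * exp (c * x) := by
  have hF : ∀ x ∈ s, HasDerivAt (fun y => u y * exp (-(c * y))) 0 x := by
    intro x hx
    refine ((hu x hx).mul ((hasDerivAt_id x).const_mul c).neg.exp).congr_deriv ?_
    ring
  obtain ⟨A, hA⟩ := hs.exists_is_const_of_deriv_eq_zero hs'
    (fun x hx => (hF x hx).differentiableAt.differentiableWithinAt) (fun x hx => (hF x hx).deriv)
  refine ⟨A, fun x hx => ?_⟩
  rw [← hA x hx, mul_assoc, ← exp_add, neg_add_cancel, exp_zero, mul_one]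

theorem eq_zero_of_integrableOn_mul_exp {s : Set ℝ} (hsm : MeasurableSet s) (hs : volume s = ⊤)
    {A c : ℝ} (hc : ∀ x ∈ s, 0 ≤ c * x) (h : IntegrableOn (fun x => A * exp (c * x)) s) :
    A = 0 := by
  have hconst : IntegrableOn (fun _ => |A|) s := by
    refine h.norm.mono' aestronglyMeasurable_const (ae_restrict_of_forall_mem hsm fun x hx => ?_)
    rw [norm_mul, norm_abs_eq_norm, Real.norm_eq_abs, Real.norm_eq_abs, abs_exp]
    exact le_mul_of_one_le_right (abs_nonneg A) (one_le_exp (hc x hx))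
  simpa [integrableOn_const_iff, hs] using hconst

theorem coupled_system_eq_mul_exp_of_integrableOn {s : Set ℝ} (hs : IsOpen s)
    (hs' : IsPreconnected s) (hvol : volume s = ⊤) {a ε c w : ℝ} {f g f' g' : ℝ → ℝ} (hε : ε ≠ 0)
    (hw : w = a - c * ε) (hcε : (c * ε) ^ 2 = a ^ 2 - 1) (hc : ∀ x ∈ s, 0 ≤ c * x)
    (hf : IntegrableOn f s) (hg : IntegrableOn g s)
    (hdf : ∀ x ∈ s, HasDerivAt f (f' x) x) (hdg : ∀ x ∈ s, HasDerivAt g (g' x) x)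
    (heq1 : ∀ x ∈ s, a * f x + ε * f' x = g x) (heq2 : ∀ x ∈ s, a * g x - ε * g' x = f x) :
    ∃ C, ∀ x ∈ s, f x = C * exp (-(c * x)) ∧ g x = C * w * exp (-(c * x)) := by
  have hdu : ∀ x ∈ s, HasDerivAt (fun y => g y - w * f y) (c * (g x - w * f x)) x := by
    intro x hx
    refine ((hdg x hx).sub ((hdf x hx).const_mul w)).congr_deriv (mul_left_cancel₀ hε ?_)
    linear_combination -heq2 x hx - w * heq1 x hx - f x * hcε + ((a + c * ε) * f x - g x) * hw
  have hgw : ∀ x ∈ s, g x = w * f x := by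
    obtain ⟨B, hB⟩ := exists_eq_mul_exp_of_hasDerivAt hs hs' hdu
    have hB0 : B = 0 := eq_zero_of_integrableOn_mul_exp hs.measurableSet hvol hc
      ((hg.sub (hf.const_mul w)).congr_fun hB hs.measurableSet)
    intro x hx
    simpa [hB0, sub_eq_zero] using hB x hx
  have hdf' : ∀ x ∈ s, HasDerivAt f (-c * f x) x := by
    intro x hx
    refine (hdf x hx).congr_deriv (mul_left_cancel₀ hε ?_)
    linear_combination heq1 x hx + hgw x hx + f x * hw
  obtain ⟨C, hC⟩ := exists_eq_mul_exp_of_hasDerivAt hs hs' hdf'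
  refine ⟨C, fun x hx => ⟨by rw [hC x hx, neg_mul], ?_⟩⟩
  rw [hgw x hx, hC x hx, neg_mul]
  ring

theorem stmt6 (l ε : ℝ) (hl : 0 < l) (hε : 0 < ε) (μ wp wm : ℝ)
    (hμ : μ = Real.sqrt (l * (l * ε^2 + 2)))
    (hwp : wp = l * ε^2 + μ * ε + 1) (hwm : wm = l * ε^2 - μ * ε + 1)
    (f g f' g' : ℝ → ℝ) (hf : Integrable f) (hg : Integrable g)
    (hdf : ∀ x : ℝ, x ≠ 0 → HasDerivAt f (f' x) x)
    (hdg : ∀ x : ℝ, x ≠ 0 → HasDerivAt g (g' x) x)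
    (heq1 : ∀ x : ℝ, x ≠ 0 → (l * ε^2 + 1) * f x + ε * f' x = g x)
    (heq2 : ∀ x : ℝ, x ≠ 0 → (l * ε^2 + 1) * g x - ε * g' x = f x) :
    ∃ c₁ c₂ : ℝ,
      (∀ x < (0:ℝ), f x = c₁ * Real.exp (μ * x)) ∧
      (∀ x > (0:ℝ), f x = c₂ * Real.exp (-(μ * x))) ∧
      (∀ x < (0:ℝ), g x = c₁ * wp * Real.exp (μ * x)) ∧
      (∀ x > (0:ℝ), g x = c₂ * wm * Real.exp (-(μ * x))) := by
  have hμ0 : 0 ≤ μ := hμ ▸ sqrt_nonneg _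
  have hμε : (μ * ε) ^ 2 = (l * ε ^ 2 + 1) ^ 2 - 1 := by
    rw [mul_pow, hμ, sq_sqrt (by positivity)]
    ring
  obtain ⟨c₁, h₁⟩ := coupled_system_eq_mul_exp_of_integrableOn isOpen_Iio isPreconnected_Iio
    Real.volume_Iio hε.ne' (c := -μ) (w := wp) (by rw [hwp]; ring) (by rwa [neg_mul, neg_sq])
    (fun x hx => neg_mul_comm μ x ▸ mul_nonneg hμ0 (neg_nonneg.2 hx.le)) hf.integrableOn hg.integrableOn
    (fun x hx => hdf x hx.ne) (fun x hx => hdg x hx.ne)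
    (fun x hx => heq1 x hx.ne) (fun x hx => heq2 x hx.ne)
  obtain ⟨c₂, h₂⟩ := coupled_system_eq_mul_exp_of_integrableOn isOpen_Ioi isPreconnected_Ioi
    Real.volume_Ioi hε.ne' (c := μ) (w := wm) (by rw [hwm]; ring) hμε
    (fun x hx => mul_nonneg hμ0 hx.le) hf.integrableOn hg.integrableOn
    (fun x hx => hdf x hx.ne') (fun x hx => hdg x hx.ne')
    (fun x hx => heq1 x hx.ne') (fun x hx => heq2 x hx.ne')
  refine ⟨c₁, c₂, fun x hx => ?_, fun x hx => (h₂ x hx).1, fun x hx => ?_,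
    fun x hx => (h₂ x hx).2⟩
  · rw [(h₁ x hx).1, neg_mul, neg_neg]
  · rw [(h₁ x hx).2, neg_mul, neg_neg]
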